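/- Let p be a probability mass function on X × G × Y (all finite, Y = {0,1}) satisfying PCC-invariance with respect to π : X → P. Let α^g_k = p(y=1 | g, π=k), α_k = p(y=1 | π=k), r(x) = p(x|y=1)/p(x|y=0), and let ρ̄(x,g) = p(y=1|x,g) be the group-aware posterior. Then for any (x,g) with p(x,g) > 0, 0 < α_{π(x)} < 1, 0 < α^g_{π(x)} < 1, and r(x) well-defined and positive: ρ̄(x,g)/(1−ρ̄(x,g)) = (α/(1−α)) · OR(α^g_{π(x)}, α_{π(x)}) · r(x), where α = p(y=1) and OR(p,q) = (p/(1−p))/(q/(1−q)). -/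
import Mathlib


open scoped Classical

/-- Probability of an event under a mass function on `X × G × Bool`. -/
noncomputable def prb {X G : Type*} [Fintype X] [Fintype G]
    (p : X × G × Bool → ℝ) (A : X × G × Bool → Prop) : ℝ :=
  ∑ z : X × G × Bool, if A z then p z else 0

/-- Conditional probability `p(A | B)`. -/
noncomputable def cnd {X G : Type*} [Fintype X] [Fintype G]
    (p : X × G × Bool → ℝ) (A B : X × G × Bool → Prop) : ℝ :=
  prb p (fun z => A z ∧ B z) / prb p B

/-- The odds ratio between probabilities `p` and `q`. -/
noncomputable def OR (p q : ℝ) : ℝ := (p / (1 - p)) / (q / (1 - q))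

lemma prb_nonneg {X G : Type*} [Fintype X] [Fintype G]
    (p : X × G × Bool → ℝ) (hnn : ∀ z, 0 ≤ p z) (A : X × G × Bool → Prop) :
    0 ≤ prb p A := by
  apply Finset.sum_nonneg
  intro z _
  split <;> simp [hnn z]

lemma prb_congr {X G : Type*} [Fintype X] [Fintype G]
    (p : X × G × Bool → ℝ) {A B : X × G × Bool → Prop} (h : ∀ z, A z ↔ B z) :
    prb p A = prb p B := by
  apply Finset.sum_congr rfl
  intro z _
  simp [h z]

lemma prb_split {X G : Type*} [Fintype X] [Fintype G]
    (p : X × G × Bool → ℝ) (A : X × G × Bool → Prop) :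
    prb p A = prb p (fun z => z.2.2 = true ∧ A z) + prb p (fun z => z.2.2 = false ∧ A z) := by
  unfold prb
  rw [← Finset.sum_add_distrib]
  apply Finset.sum_congr rfl
  intro z _
  by_cases h : A z <;> cases hb : z.2.2 <;> simp [h, hb]

lemma div_pos_elim {a b : ℝ} (h : 0 < a / b) (ha : 0 ≤ a) (hb : 0 ≤ b) :
    0 < a ∧ 0 < b := by
  rcases hb.lt_or_eq with hb' | hb'
  · exact ⟨(div_pos_iff.mp h).resolve_right (fun ⟨_, h2⟩ => absurd hb' h2.not_gt) |>.1, hb'⟩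
  · rw [← hb', div_zero] at h; exact absurd h (lt_irrefl 0)

lemma odds_simp {a b : ℝ} (ha : 0 < a) (hb : 0 < b) :
    a / (a + b) / (1 - a / (a + b)) = a / b := by
  have hab : a + b ≠ 0 := by positivity
  rw [one_sub_div hab]
  have h2 : a + b - a = b := by ring
  rw [h2, div_div_div_eq, mul_comm, mul_div_mul_left _ _ hab]

/-- Under PCC-invariance, the group-aware posterior odds factor into the prior odds,
an odds-ratio correction depending on the group and cluster, and the density ratio. -/
theorem group_aware_posterior_odds_factorization {X G P : Type*}
    [Fintype X] [Fintype G] (π : X → P)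
    (p : X × G × Bool → ℝ) (hnn : ∀ z, 0 ≤ p z) (hsum : ∑ z, p z = 1)
    (hpcc : ∀ (x : X) (y : Bool) (g : G),
      0 < prb p (fun z => z.2.2 = y ∧ z.2.1 = g ∧ π z.1 = π x) →
      cnd p (fun z => z.1 = x) (fun z => z.2.2 = y ∧ z.2.1 = g ∧ π z.1 = π x)
        = cnd p (fun z => z.1 = x) (fun z => z.2.2 = y ∧ π z.1 = π x))
    (x : X) (g : G)
    (hxg : 0 < prb p (fun z => z.1 = x ∧ z.2.1 = g))
    (hαk0 : 0 < cnd p (fun z => z.2.2 = true) (fun z => π z.1 = π x))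
    (hαk1 : cnd p (fun z => z.2.2 = true) (fun z => π z.1 = π x) < 1)
    (hαgk0 : 0 < cnd p (fun z => z.2.2 = true) (fun z => z.2.1 = g ∧ π z.1 = π x))
    (hαgk1 : cnd p (fun z => z.2.2 = true) (fun z => z.2.1 = g ∧ π z.1 = π x) < 1)
    (hfp : 0 < cnd p (fun z => z.1 = x) (fun z => z.2.2 = true))
    (hfm : 0 < cnd p (fun z => z.1 = x) (fun z => z.2.2 = false)) :
    cnd p (fun z => z.2.2 = true) (fun z => z.1 = x ∧ z.2.1 = g)
      / (1 - cnd p (fun z => z.2.2 = true) (fun z => z.1 = x ∧ z.2.1 = g))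
    = (prb p (fun z => z.2.2 = true) / (1 - prb p (fun z => z.2.2 = true)))
      * OR (cnd p (fun z => z.2.2 = true) (fun z => z.2.1 = g ∧ π z.1 = π x))
           (cnd p (fun z => z.2.2 = true) (fun z => π z.1 = π x))
      * (cnd p (fun z => z.1 = x) (fun z => z.2.2 = true)
          / cnd p (fun z => z.1 = x) (fun z => z.2.2 = false)) := by
  have nn := prb_nonneg p hnn
  -- total mass
  have hone : prb p (fun _ => True) = 1 := by
    unfold prb; simpa using hsum
  have hAB : prb p (fun z => z.2.2 = true) + prb p (fun z => z.2.2 = false) = 1 := by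
    rw [← hone, prb_split p (fun _ => True)]
    congr 1 <;> exact prb_congr p (by simp)
  simp only [cnd, OR] at *
  set A := prb p (fun z => z.2.2 = true) with hAdef
  set B := prb p (fun z => z.2.2 = false) with hBdef
  set Ax1 := prb p (fun z => z.1 = x ∧ z.2.2 = true) with hAx1def
  set Ax0 := prb p (fun z => z.1 = x ∧ z.2.2 = false) with hAx0def
  set Pk := prb p (fun z => π z.1 = π x) with hPkdef
  set P1k := prb p (fun z => z.2.2 = true ∧ π z.1 = π x) with hP1kdef
  set P0k := prb p (fun z => z.2.2 = false ∧ π z.1 = π x) with hP0kdef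
  set Pgk := prb p (fun z => z.2.1 = g ∧ π z.1 = π x) with hPgkdef
  set P1gk := prb p (fun z => z.2.2 = true ∧ z.2.1 = g ∧ π z.1 = π x) with hP1gkdef
  set P0gk := prb p (fun z => z.2.2 = false ∧ z.2.1 = g ∧ π z.1 = π x) with hP0gkdef
  set Pxg := prb p (fun z => z.1 = x ∧ z.2.1 = g) with hPxgdef
  set Pxg1 := prb p (fun z => z.2.2 = true ∧ z.1 = x ∧ z.2.1 = g) with hPxg1def
  set Pxg0 := prb p (fun z => z.2.2 = false ∧ z.1 = x ∧ z.2.1 = g) with hPxg0def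
  -- splits
  have hsPk : Pk = P1k + P0k := prb_split p _
  have hsPgk : Pgk = P1gk + P0gk := prb_split p _
  have hsPxg : Pxg = Pxg1 + Pxg0 := prb_split p _
  -- positivity
  obtain ⟨hAx1p, hAp⟩ := div_pos_elim hfp (nn _) (nn _)
  obtain ⟨hAx0p, hBp⟩ := div_pos_elim hfm (nn _) (nn _)
  obtain ⟨hP1kp, hPkp⟩ := div_pos_elim hαk0 (nn _) (nn _)
  obtain ⟨hP1gkp, hPgkp⟩ := div_pos_elim hαgk0 (nn _) (nn _)
  have hP0kp : 0 < P0k := by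
    have := (div_lt_one hPkp).mp hαk1
    linarith [hsPk]
  have hP0gkp : 0 < P0gk := by
    have := (div_lt_one hPgkp).mp hαgk1
    linarith [hsPgk]
  -- PCC applications
  have hp1 := hpcc x true g hP1gkp
  have hp0 := hpcc x false g hP0gkp
  have e1a : prb p (fun z => z.1 = x ∧ z.2.2 = true ∧ z.2.1 = g ∧ π z.1 = π x) = Pxg1 := by
    apply prb_congr
    intro z
    constructor
    · rintro ⟨h1, h2, h3, _⟩; exact ⟨h2, h1, h3⟩
    · rintro ⟨h2, h1, h3⟩; exact ⟨h1, h2, h3, by rw [h1]⟩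
  have e1b : prb p (fun z => z.1 = x ∧ z.2.2 = true ∧ π z.1 = π x) = Ax1 := by
    apply prb_congr
    intro z
    constructor
    · rintro ⟨h1, h2, _⟩; exact ⟨h1, h2⟩
    · rintro ⟨h1, h2⟩; exact ⟨h1, h2, by rw [h1]⟩
  have e0a : prb p (fun z => z.1 = x ∧ z.2.2 = false ∧ z.2.1 = g ∧ π z.1 = π x) = Pxg0 := by
    apply prb_congr
    intro z
    constructor
    · rintro ⟨h1, h2, h3, _⟩; exact ⟨h2, h1, h3⟩
    · rintro ⟨h2, h1, h3⟩; exact ⟨h1, h2, h3, by rw [h1]⟩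
  have e0b : prb p (fun z => z.1 = x ∧ z.2.2 = false ∧ π z.1 = π x) = Ax0 := by
    apply prb_congr
    intro z
    constructor
    · rintro ⟨h1, h2, _⟩; exact ⟨h1, h2⟩
    · rintro ⟨h1, h2⟩; exact ⟨h1, h2, by rw [h1]⟩
  rw [e1a, e1b] at hp1
  rw [e0a, e0b] at hp0
  -- key equations
  have eq1 : Pxg1 = Ax1 * P1gk / P1k := by
    rw [div_eq_div_iff hP1gkp.ne' hP1kp.ne'] at hp1
    field_simp
    linarith [hp1]
  have eq0 : Pxg0 = Ax0 * P0gk / P0k := by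
    rw [div_eq_div_iff hP0gkp.ne' hP0kp.ne'] at hp0
    field_simp
    linarith [hp0]
  have hPxg1p : 0 < Pxg1 := by rw [eq1]; positivity
  have hPxg0p : 0 < Pxg0 := by rw [eq0]; positivity
  have h1A : (1 : ℝ) - A = B := by linarith
  rw [hsPxg, hsPk, hsPgk, h1A, odds_simp hPxg1p hPxg0p, odds_simp hP1gkp hP0gkp,
    odds_simp hP1kp hP0kp, eq1, eq0]
  field_simp
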